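/- Let F₁, F₂ be distribution functions on ℝ such that 1 − F_i(x) ~ a_i x^{−ν_i} as x → ∞, with a_i > 0 and ν_i > 0. Then the convolution G = F₁ * F₂ satisfies 1 − G(x) ~ α x^{−min(ν₁, ν₂)} as x → ∞, where α = a₁ if ν₁ < ν₂, α = a₂ if ν₂ < ν₁, and α = a₁ + a₂ if ν₁ = ν₂. Equivalently, 1 − G(x) ~ (1 − F₁(x)) + (1 − F₂(x)). -/

import Mathlib

/-!
If `X₁ + X₂ > x`, then one summand exceeds `c x` or both exceed `(1 - c) x`; the last event
has probability `o(x^{-ν})`, a vanishing tail times an `O(x^{-ν})` tail. Conversely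
`X₁ + X₂ > x` as soon as one summand exceeds `x - m` and the other is at least `m`, which by
inclusion–exclusion has probability close to `P(X₁ > x - m) + P(X₂ > x - m)` when `m → -∞`.
As `(c x)^{-ν} / x^{-ν} = c^{-ν} → 1` when `c → 1` and `(x - m)^{-ν} / x^{-ν} → 1`, the two
bounds squeeze `P(X₁ + X₂ > x) / x^{-ν}` to the sum of the limits of `P(Xᵢ > x) / x^{-ν}`.
-/

open MeasureTheory Filter Topology Set

lemma Filter.Tendsto.div_trans {α : Type*} {l : Filter α} {f g h : α → ℝ} {a b : ℝ}
    (hfg : Tendsto (fun x => f x / g x) l (𝓝 a)) (hgh : Tendsto (fun x => g x / h x) l (𝓝 b))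
    (hg : ∀ᶠ x in l, g x ≠ 0) : Tendsto (fun x => f x / h x) l (𝓝 (a * b)) :=
  (hfg.mul hgh).congr' <| hg.mono fun _ hx => div_mul_div_cancel₀ hx

lemma eventually_rpow_ne_zero (ν : ℝ) : ∀ᶠ x : ℝ in atTop, x ^ ν ≠ 0 :=
  (eventually_gt_atTop 0).mono fun _ hx => (Real.rpow_pos_of_pos hx _).ne'

lemma Filter.Tendsto.comp_mul_div_rpow {f : ℝ → ℝ} {ν a c : ℝ}
    (hf : Tendsto (fun x => f x / x ^ (-ν)) atTop (𝓝 a)) (hc : 0 < c) :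
    Tendsto (fun x => f (c * x) / x ^ (-ν)) atTop (𝓝 (a * c ^ (-ν))) := by
  have hg : Tendsto (c * ·) atTop atTop := tendsto_id.const_mul_atTop hc
  refine (hf.comp hg).div_trans (tendsto_const_nhds.congr' ?_)
    (hg.eventually (eventually_rpow_ne_zero _))
  filter_upwards [eventually_gt_atTop 0] with x hx
  rw [Real.mul_rpow hc.le hx.le, mul_div_cancel_right₀ _ (Real.rpow_pos_of_pos hx _).ne']

lemma Filter.Tendsto.comp_sub_div_rpow {f : ℝ → ℝ} {ν a : ℝ}
    (hf : Tendsto (fun x => f x / x ^ (-ν)) atTop (𝓝 a)) (m : ℝ) :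
    Tendsto (fun x => f (x - m) / x ^ (-ν)) atTop (𝓝 a) := by
  have hg : Tendsto (· - m) atTop atTop := tendsto_atTop_add_const_right _ (-m) tendsto_id
  have hratio : Tendsto (fun x : ℝ => ((x - m) / x) ^ (-ν)) atTop (𝓝 1) := by
    have h : Tendsto (fun x : ℝ => 1 - m / x) atTop (𝓝 1) := by
      simpa using (tendsto_const_nhds (x := (1:ℝ))).sub (tendsto_const_nhds.div_atTop tendsto_id)
    simpa using (h.congr' ((eventually_ne_atTop 0).mono fun x hx => by field_simp)).rpow_const
      (Or.inl one_ne_zero)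
  have hpow : Tendsto (fun x : ℝ => (x - m) ^ (-ν) / x ^ (-ν)) atTop (𝓝 1) := by
    refine hratio.congr' ?_
    filter_upwards [eventually_gt_atTop m, eventually_gt_atTop 0] with x hxm hx
    rw [Real.div_rpow (by linarith) hx.le]
  simpa using (hf.comp hg).div_trans hpow (hg.eventually (eventually_rpow_ne_zero _))

lemma tendsto_div_rpow_of_tendsto_div_mul_rpow {f : ℝ → ℝ} {a ρ ν : ℝ} (ha : a ≠ 0)
    (hνρ : ν ≤ ρ) (hf : Tendsto (fun x => f x / (a * x ^ (-ρ))) atTop (𝓝 1)) :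
    Tendsto (fun x => f x / x ^ (-ν)) atTop (𝓝 (if ρ = ν then a else 0)) := by
  suffices h : Tendsto (fun x : ℝ => a * x ^ (-ρ) / x ^ (-ν)) atTop (𝓝 (if ρ = ν then a else 0)) by
    simpa using hf.div_trans h ((eventually_rpow_ne_zero _).mono fun _ hx => mul_ne_zero ha hx)
  rcases hνρ.eq_or_lt with rfl | hlt
  · rw [if_pos rfl]
    refine tendsto_const_nhds.congr' ?_
    filter_upwards [eventually_rpow_ne_zero (-ν)] with x hx
    rw [mul_div_cancel_right₀ _ hx]
  · rw [if_neg hlt.ne']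
    have h := (tendsto_rpow_neg_atTop (sub_pos.2 hlt)).const_mul a
    rw [mul_zero] at h
    refine h.congr' ?_
    filter_upwards [eventually_gt_atTop 0] with x hx
    rw [mul_div_assoc, ← Real.rpow_sub hx]
    ring_nf

namespace MeasureTheory

lemma one_sub_measureReal_Iic (μ : Measure ℝ) [IsProbabilityMeasure μ] (x : ℝ) :
    1 - μ.real (Iic x) = μ.real (Ioi x) := by
  rw [← compl_Iic, probReal_compl_eq_one_sub measurableSet_Iic]

lemma tendsto_measureReal_Ioi_atTop (μ : Measure ℝ) [IsProbabilityMeasure μ] :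
    Tendsto (fun x => μ.real (Ioi x)) atTop (𝓝 0) := by
  have h := (ENNReal.tendsto_toReal (measure_ne_top μ univ)).comp (tendsto_measure_Iic_atTop μ)
  rw [measure_univ, ENNReal.toReal_one] at h
  simpa [Function.comp_def, ← measureReal_def, one_sub_measureReal_Iic] using h.const_sub 1

lemma tendsto_measureReal_Ici_atBot (μ : Measure ℝ) [IsProbabilityMeasure μ] :
    Tendsto (fun x => μ.real (Ici x)) atBot (𝓝 1) := by
  have h := (ENNReal.tendsto_toReal (measure_ne_top μ univ)).comp (tendsto_measure_Ici_atBot μ)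
  rwa [measure_univ, ENNReal.toReal_one] at h

lemma Measure.conv_apply {M : Type*} [AddMonoid M] [MeasurableSpace M] [MeasurableAdd₂ M]
    (μ ν : Measure M) {s : Set M} (hs : MeasurableSet s) :
    (μ ∗ ν) s = μ.prod ν ((fun q => q.1 + q.2) ⁻¹' s) :=
  Measure.map_apply measurable_add hs

variable (μ₁ μ₂ : Measure ℝ) [IsProbabilityMeasure μ₁] [IsProbabilityMeasure μ₂]

lemma measureReal_conv_Ioi_add_le (s t : ℝ) :
    (μ₁ ∗ μ₂).real (Ioi (s + t)) ≤
      μ₁.real (Ioi s) + μ₂.real (Ioi s) + μ₁.real (Ioi t) * μ₂.real (Ioi t) := by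
  have hsub : {q : ℝ × ℝ | s + t < q.1 + q.2} ⊆
      (Ioi s ×ˢ univ ∪ univ ×ˢ Ioi s) ∪ Ioi t ×ˢ Ioi t := by
    rintro ⟨p, q⟩ hpq
    simp only [mem_ofPred_eq] at hpq
    simp only [mem_union, mem_prod, mem_Ioi, mem_univ, and_true, true_and]
    by_contra! h
    linarith [h.1.1, h.1.2, h.2 (by linarith [h.1.2])]
  calc (μ₁ ∗ μ₂).real (Ioi (s + t))
      ≤ (μ₁.prod μ₂).real ((Ioi s ×ˢ univ ∪ univ ×ˢ Ioi s) ∪ Ioi t ×ˢ Ioi t) := by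
        rw [measureReal_def, Measure.conv_apply _ _ measurableSet_Ioi]
        exact measureReal_mono hsub
    _ ≤ (μ₁.prod μ₂).real (Ioi s ×ˢ univ) + (μ₁.prod μ₂).real (univ ×ˢ Ioi s)
          + (μ₁.prod μ₂).real (Ioi t ×ˢ Ioi t) :=
        (measureReal_union_le _ _).trans (by gcongr; exact measureReal_union_le _ _)
    _ = _ := by simp only [measureReal_prod_prod, probReal_univ, mul_one, one_mul]

lemma le_measureReal_conv_Ioi_add (s m : ℝ) :
    μ₁.real (Ioi s) * μ₂.real (Ici m) + μ₁.real (Ici m) * μ₂.real (Ioi s)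
      - μ₁.real (Ioi s) * μ₂.real (Ioi s) ≤ (μ₁ ∗ μ₂).real (Ioi (s + m)) := by
  have hunion : Ioi s ×ˢ Ici m ∪ Ici m ×ˢ Ioi s ⊆ {q : ℝ × ℝ | s + m < q.1 + q.2} := by
    rintro ⟨p, q⟩ (⟨hp, hq⟩ | ⟨hp, hq⟩) <;>
    · simp only [mem_Ioi, mem_Ici] at hp hq
      simp only [mem_ofPred_eq]
      linarith
  have hinter : Ioi s ×ˢ Ici m ∩ Ici m ×ˢ Ioi s ⊆ Ioi s ×ˢ Ioi s := by
    rw [prod_inter_prod]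
    exact prod_mono inter_subset_left inter_subset_right
  have hsplit := measureReal_union_add_inter (μ := μ₁.prod μ₂) (s := Ioi s ×ˢ Ici m)
    (t := Ici m ×ˢ Ioi s) (measurableSet_Ici.prod measurableSet_Ioi)
  have hle_union : (μ₁.prod μ₂).real (Ioi s ×ˢ Ici m ∪ Ici m ×ˢ Ioi s)
      ≤ (μ₁ ∗ μ₂).real (Ioi (s + m)) := by
    rw [measureReal_def (μ₁ ∗ μ₂), Measure.conv_apply _ _ measurableSet_Ioi]
    exact measureReal_mono hunion
  have hle_inter := measureReal_mono (μ := μ₁.prod μ₂) hinter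
  simp only [measureReal_prod_prod] at hsplit hle_inter
  linarith

variable {μ₁ μ₂} {ν l₁ l₂ : ℝ}
  (h₁ : Tendsto (fun x => μ₁.real (Ioi x) / x ^ (-ν)) atTop (𝓝 l₁))
  (h₂ : Tendsto (fun x => μ₂.real (Ioi x) / x ^ (-ν)) atTop (𝓝 l₂))
include h₁ h₂

lemma eventually_lt_measureReal_conv_Ioi_div_rpow {a : ℝ} (ha : a < l₁ + l₂) :
    ∀ᶠ x in atTop, a < (μ₁ ∗ μ₂).real (Ioi x) / x ^ (-ν) := by
  have hmass : Tendsto (fun m => l₁ * μ₂.real (Ici m) + μ₁.real (Ici m) * l₂) atBot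
      (𝓝 (l₁ * 1 + 1 * l₂)) :=
    ((tendsto_measureReal_Ici_atBot μ₂).const_mul l₁).add
      ((tendsto_measureReal_Ici_atBot μ₁).mul_const l₂)
  rw [mul_one, one_mul] at hmass
  obtain ⟨m, hm⟩ := (hmass.eventually_const_lt ha).exists
  have hlow : Tendsto (fun x => (μ₁.real (Ioi (x - m)) * μ₂.real (Ici m)
      + μ₁.real (Ici m) * μ₂.real (Ioi (x - m))
      - μ₁.real (Ioi (x - m)) * μ₂.real (Ioi (x - m))) / x ^ (-ν)) atTop
      (𝓝 (l₁ * μ₂.real (Ici m) + μ₁.real (Ici m) * l₂ - 0 * l₂)) := by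
    have h₀ := ((tendsto_measureReal_Ioi_atTop μ₁).comp
      (tendsto_atTop_add_const_right _ (-m) tendsto_id)).mul (h₂.comp_sub_div_rpow m)
    refine ((((h₁.comp_sub_div_rpow m).mul_const _).add
      ((h₂.comp_sub_div_rpow m).const_mul _)).sub h₀).congr fun x => ?_
    simp only [Function.comp_def, id_eq, sub_eq_add_neg]
    ring
  rw [zero_mul, sub_zero] at hlow
  filter_upwards [hlow.eventually_const_lt hm, eventually_gt_atTop 0] with x hx hx₀
  refine hx.trans_le (div_le_div_of_nonneg_right ?_ (Real.rpow_nonneg hx₀.le _))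
  simpa using le_measureReal_conv_Ioi_add μ₁ μ₂ (x - m) m

lemma eventually_measureReal_conv_Ioi_div_rpow_lt {b : ℝ} (hb : l₁ + l₂ < b) :
    ∀ᶠ x in atTop, (μ₁ ∗ μ₂).real (Ioi x) / x ^ (-ν) < b := by
  have hc : ∀ᶠ c in 𝓝[<] (1 : ℝ), c ^ (-ν) * (l₁ + l₂) < b ∧ c ∈ Ioo 0 1 := by
    refine Eventually.and (nhdsWithin_le_nhds ?_) (Ioo_mem_nhdsLT zero_lt_one)
    have h := (Real.continuousAt_rpow_const 1 (-ν) (Or.inl one_ne_zero)).tendsto.mul_const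
      (l₁ + l₂)
    rw [Real.one_rpow, one_mul] at h
    exact h.eventually_lt_const hb
  obtain ⟨c, hcb, hc₀, hc₁⟩ := hc.exists
  have hup : Tendsto (fun x => (μ₁.real (Ioi (c * x)) + μ₂.real (Ioi (c * x))
      + μ₁.real (Ioi ((1 - c) * x)) * μ₂.real (Ioi ((1 - c) * x))) / x ^ (-ν)) atTop
      (𝓝 (l₁ * c ^ (-ν) + l₂ * c ^ (-ν) + 0 * (l₂ * (1 - c) ^ (-ν)))) := by
    have h₀ := ((tendsto_measureReal_Ioi_atTop μ₁).comp
      (tendsto_id.const_mul_atTop (sub_pos.2 hc₁))).mul (h₂.comp_mul_div_rpow (sub_pos.2 hc₁))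
    refine (((h₁.comp_mul_div_rpow hc₀).add (h₂.comp_mul_div_rpow hc₀)).add h₀).congr
      fun x => ?_
    simp only [Function.comp_def, id_eq]
    ring
  rw [zero_mul, add_zero, ← add_mul, mul_comm] at hup
  filter_upwards [hup.eventually_lt_const hcb, eventually_gt_atTop 0] with x hx hx₀
  refine lt_of_le_of_lt (div_le_div_of_nonneg_right ?_ (Real.rpow_nonneg hx₀.le _)) hx
  simpa [← add_mul] using measureReal_conv_Ioi_add_le μ₁ μ₂ (c * x) ((1 - c) * x)

theorem tendsto_measureReal_conv_Ioi_div_rpow :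
    Tendsto (fun x => (μ₁ ∗ μ₂).real (Ioi x) / x ^ (-ν)) atTop (𝓝 (l₁ + l₂)) :=
  tendsto_order.2 ⟨fun _ ha => eventually_lt_measureReal_conv_Ioi_div_rpow h₁ h₂ ha,
    fun _ hb => eventually_measureReal_conv_Ioi_div_rpow_lt h₁ h₂ hb⟩

end MeasureTheory

theorem feller_convolution_power_tails_general
    (μ₁ μ₂ : Measure ℝ) [IsProbabilityMeasure μ₁] [IsProbabilityMeasure μ₂]
    (a₁ a₂ ν₁ ν₂ : ℝ) (ha₁ : 0 < a₁) (ha₂ : 0 < a₂)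
    (F₁ F₂ G : ℝ → ℝ)
    (hF₁ : ∀ x, F₁ x = (μ₁ (Set.Iic x)).toReal)
    (hF₂ : ∀ x, F₂ x = (μ₂ (Set.Iic x)).toReal)
    (hG : ∀ x, G x = ((μ₁.prod μ₂) {q : ℝ × ℝ | q.1 + q.2 ≤ x}).toReal)
    (htail₁ : Tendsto (fun x : ℝ => (1 - F₁ x) / (a₁ * x ^ (-ν₁))) atTop (𝓝 1))
    (htail₂ : Tendsto (fun x : ℝ => (1 - F₂ x) / (a₂ * x ^ (-ν₂))) atTop (𝓝 1))
    (α : ℝ) (hα : α = if ν₁ < ν₂ then a₁ else if ν₂ < ν₁ then a₂ else a₁ + a₂) :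
    Tendsto (fun x : ℝ => (1 - G x) / (α * x ^ (-(min ν₁ ν₂)))) atTop (𝓝 1) ∧
      Tendsto (fun x : ℝ => (1 - G x) / ((1 - F₁ x) + (1 - F₂ x))) atTop (𝓝 1) := by
  have hT₁ (x : ℝ) : 1 - F₁ x = μ₁.real (Ioi x) := hF₁ x ▸ one_sub_measureReal_Iic μ₁ x
  have hT₂ (x : ℝ) : 1 - F₂ x = μ₂.real (Ioi x) := hF₂ x ▸ one_sub_measureReal_Iic μ₂ x
  have hTG (x : ℝ) : 1 - G x = (μ₁ ∗ μ₂).real (Ioi x) := by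
    rw [hG, ← one_sub_measureReal_Iic, measureReal_def, Measure.conv_apply _ _ measurableSet_Iic]
    rfl
  have hl₁ := tendsto_div_rpow_of_tendsto_div_mul_rpow ha₁.ne' (min_le_left ν₁ ν₂) htail₁
  have hl₂ := tendsto_div_rpow_of_tendsto_div_mul_rpow ha₂.ne' (min_le_right ν₁ ν₂) htail₂
  have hsum : ((if ν₁ = min ν₁ ν₂ then a₁ else 0) + if ν₂ = min ν₁ ν₂ then a₂ else 0) = α := by
    rcases lt_trichotomy ν₁ ν₂ with h | rfl | h
    · simp [hα, h, h.ne', min_eq_left h.le]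
    · simp [hα]
    · simp [hα, h, h.ne', h.asymm, min_eq_right h.le]
  have hα₀ : α ≠ 0 := by
    rw [hα]
    split_ifs <;> positivity
  have hT := tendsto_measureReal_conv_Ioi_div_rpow (hl₁.congr fun x => by rw [hT₁])
    (hl₂.congr fun x => by rw [hT₂])
  have hS := hl₁.add hl₂
  simp only [← hTG, hsum] at hT hS
  constructor
  · simpa only [div_mul_eq_div_div_swap, div_self hα₀] using hT.div_const α
  · have h := hT.div hS hα₀
    rw [div_self hα₀] at h
    refine h.congr' ?_
    filter_upwards [eventually_rpow_ne_zero (-min ν₁ ν₂)] with x hx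
    rw [Pi.div_apply, ← add_div, div_div_div_cancel_right₀ hx]

/-- Feller's convolution result for power-law tails: if `1 - Fᵢ(x) ~ aᵢ x^{-νᵢ}`,
then the distribution `G` of the sum of independent random variables with laws
`μ₁, μ₂` satisfies `1 - G(x) ~ α x^{-min(ν₁,ν₂)}`, where `α = a₁`, `a₂` or
`a₁ + a₂` according to which exponent is smaller; equivalently
`1 - G(x) ~ (1 - F₁(x)) + (1 - F₂(x))`. -/
theorem feller_convolution_power_tails
    (μ₁ μ₂ : Measure ℝ) [IsProbabilityMeasure μ₁] [IsProbabilityMeasure μ₂]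
    (a₁ a₂ ν₁ ν₂ : ℝ) (ha₁ : 0 < a₁) (ha₂ : 0 < a₂) (hν₁ : 0 < ν₁) (hν₂ : 0 < ν₂)
    (F₁ F₂ G : ℝ → ℝ)
    (hF₁ : ∀ x, F₁ x = (μ₁ (Set.Iic x)).toReal)
    (hF₂ : ∀ x, F₂ x = (μ₂ (Set.Iic x)).toReal)
    (hG : ∀ x, G x = ((μ₁.prod μ₂) {q : ℝ × ℝ | q.1 + q.2 ≤ x}).toReal)
    (htail₁ : Tendsto (fun x : ℝ => (1 - F₁ x) / (a₁ * x ^ (-ν₁))) atTop (𝓝 1))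
    (htail₂ : Tendsto (fun x : ℝ => (1 - F₂ x) / (a₂ * x ^ (-ν₂))) atTop (𝓝 1))
    (α : ℝ) (hα : α = if ν₁ < ν₂ then a₁ else if ν₂ < ν₁ then a₂ else a₁ + a₂) :
    Tendsto (fun x : ℝ => (1 - G x) / (α * x ^ (-(min ν₁ ν₂)))) atTop (𝓝 1) ∧
      Tendsto (fun x : ℝ => (1 - G x) / ((1 - F₁ x) + (1 - F₂ x))) atTop (𝓝 1) :=
  feller_convolution_power_tails_general μ₁ μ₂ a₁ a₂ ν₁ ν₂ ha₁ ha₂ F₁ F₂ G hF₁ hF₂ hG htail₁ htail₂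
    α hα
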